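/- Let G be a 2-connected cubic graph with a minimal 3-edge cut E_0 whose one side is a copy of P = P_10 − z. Then for every f-matching M of G, at least one vertex of V(P) is not covered by M. -/

import Mathlib

open SimpleGraph

/-- Degree of a vertex, via the cardinality of its neighbor set. -/
noncomputable def hdeg {V : Type*} (G : SimpleGraph V) (v : V) : ℕ :=
  {w | G.Adj v w}.ncard

/-- A cubic graph: every vertex has degree 3. -/
def IsCubic {V : Type*} (G : SimpleGraph V) : Prop := ∀ v, hdeg G v = 3

/-- A 2-connected graph: at least 3 vertices and deleting any vertex leaves it connected. -/
def TwoConnected {V : Type*} (G : SimpleGraph V) : Prop :=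
  3 ≤ Nat.card V ∧ ∀ v : V, (G.induce {v}ᶜ).Connected

/-- A 3-connected graph: at least 4 vertices and deleting any two vertices leaves it connected. -/
def ThreeConnected {V : Type*} (G : SimpleGraph V) : Prop :=
  4 ≤ Nat.card V ∧ ∀ v w : V, v ≠ w → (G.induce ({v, w} : Set V)ᶜ).Connected

/-- Edge list of the Petersen graph on `Fin 10` (vertex 9 has neighbors 4, 6, 7). -/
def petEdges : List (Fin 10 × Fin 10) :=
  [(0,1),(1,2),(2,3),(3,4),(4,0),(0,5),(1,6),(2,7),(3,8),(4,9),(5,7),(7,9),(9,6),(6,8),(8,5)]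

/-- The Petersen graph `P₁₀`. -/
def Pet : SimpleGraph (Fin 10) := SimpleGraph.fromRel (fun a b => (a, b) ∈ petEdges)

/-- Edge list of `P = P₁₀ - z` on `Fin 9` (where `z` was vertex 9);
its three 2-valent vertices are 4, 6, 7. -/
def pEdges : List (Fin 9 × Fin 9) :=
  [(0,1),(1,2),(2,3),(3,4),(4,0),(0,5),(1,6),(2,7),(3,8),(5,7),(6,8),(8,5)]

/-- The graph `P = P₁₀ - z`, the Petersen graph minus one vertex. -/
def Pgr : SimpleGraph (Fin 9) := SimpleGraph.fromRel (fun a b => (a, b) ∈ pEdges)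

/-- The three 2-valent vertices of `P` (as targets of the port assignment). -/
def portIdx : ℕ → Fin 9
  | 0 => 4
  | 1 => 6
  | _ => 7

/-- Port assignment: to which 2-valent vertex of the copy of `P` replacing `u` the
neighbor `v` of `u` gets attached (neighbors are ordered by the injective encoding `enc`). -/
noncomputable def port {V : Type*} (G : SimpleGraph V) (enc : V → ℕ) (u v : V) : Fin 9 :=
  portIdx (Nat.card {w : V | G.Adj u w ∧ enc w < enc v})

/-- Simultaneous `P`-inflation at every vertex of `G`. -/
noncomputable def inflate {V : Type*} (G : SimpleGraph V) (enc : V → ℕ) :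
    SimpleGraph (V × Fin 9) where
  Adj a b :=
    (a.1 = b.1 ∧ Pgr.Adj a.2 b.2) ∨
    (G.Adj a.1 b.1 ∧ a.2 = port G enc a.1 b.1 ∧ b.2 = port G enc b.1 a.1)
  symm := by
    constructor
    rintro a b (⟨h1, h2⟩ | ⟨h1, h2, h3⟩)
    · exact Or.inl ⟨h1.symm, h2.symm⟩
    · exact Or.inr ⟨h1.symm, h3, h2⟩
  loopless := by
    constructor
    rintro a (⟨-, h⟩ | ⟨h, -, -⟩)
    · exact Pgr.loopless.irrefl _ h
    · exact G.loopless.irrefl _ h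

/-- A graph bundled with an injective-style encoding of its vertices into `ℕ`. -/
structure GE where
  V : Type
  G : SimpleGraph V
  enc : V → ℕ

/-- One round of simultaneous `P`-inflation. -/
noncomputable def step (A : GE) : GE :=
  ⟨A.V × Fin 9, inflate A.G A.enc, fun p => Nat.pair (A.enc p.1) p.2.val⟩

/-- The iterated Petersen graph `P₁₀ᵏ`. -/
noncomputable def ItP10 : ℕ → GE
  | 0 => ⟨Fin 10, Pet, Fin.val⟩
  | k + 1 => step (ItP10 k)

/-- The iterated graph `Pᵏ` (starting from `P = P₁₀ - z`). -/
noncomputable def ItP : ℕ → GE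
  | 0 => ⟨Fin 9, Pgr, Fin.val⟩
  | k + 1 => step (ItP k)

/-- The canonical copy of `P^{k-1}` in `P₁₀ᵏ` containing a given vertex,
recorded by the corresponding vertex of `P₁₀`. -/
noncomputable def baseOf : (k : ℕ) → (ItP10 k).V → Fin 10
  | 0 => id
  | k + 1 => fun p => baseOf k p.1

/-- The parameter `l(G)`: minimum over circuits `C` of the maximum over vertices `v`
of the distance `d(C, v)`. -/
noncomputable def ell {V : Type*} (G : SimpleGraph V) : ℕ :=
  sInf { n | ∃ (v : V) (w : G.Walk v v), w.IsCycle ∧ ∀ u : V, ∃ x ∈ w.support, G.dist x u ≤ n }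

/-- `M` is a matching of `G`: a set of edges of `G`, pairwise not sharing a vertex. -/
def IsMatchingSet {V : Type*} (G : SimpleGraph V) (M : Set (Sym2 V)) : Prop :=
  M ⊆ G.edgeSet ∧ ∀ e ∈ M, ∀ f ∈ M, e ≠ f → ∀ v : V, ¬(v ∈ e ∧ v ∈ f)

/-- Every connected component of `H` has an even number of vertices. -/
def EvenComponents {V : Type*} (H : SimpleGraph V) : Prop :=
  ∀ c : H.ConnectedComponent, Even c.supp.ncard

/-- An `f`-matching: a matching `M` such that every component of `G - M` is
2-connected and has an even number of vertices. -/
def IsFMatching {V : Type*} (G : SimpleGraph V) (M : Set (Sym2 V)) : Prop :=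
  IsMatchingSet G M ∧
    ∀ c : (G.deleteEdges M).ConnectedComponent,
      TwoConnected ((G.deleteEdges M).induce c.supp) ∧ Even c.supp.ncard

/-- A minimal edge cut of `G`: deleting it disconnects `G`, but deleting any
proper subset does not. -/
def IsMinEdgeCut {V : Type*} (G : SimpleGraph V) (E : Set (Sym2 V)) : Prop :=
  E ⊆ G.edgeSet ∧ ¬(G.deleteEdges E).Connected ∧
    ∀ F : Set (Sym2 V), F ⊂ E → (G.deleteEdges F).Connected

/-- `H` is a subdivision of `F`: the vertices of `F` embed into `H` and each edge of `F`
corresponds to a path in `H`, the paths being internally disjoint and covering `H`. -/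
def IsSubdivisionOf {W U : Type*} (H : SimpleGraph W) (F : SimpleGraph U) : Prop :=
  ∃ f : U ↪ W, ∃ p : ∀ u v : U, F.Adj u v → H.Walk (f u) (f v),
    (∀ u v h, (p u v h).IsPath) ∧
    (∀ u v h, ∀ w ∈ (p u v h).support, w ∈ Set.range f → w = f u ∨ w = f v) ∧
    (∀ e : Sym2 W, e ∈ H.edgeSet ↔ ∃ u v h, e ∈ (p u v h).edges) ∧
    (∀ w : W, w ∈ Set.range f ∨ ∃ u v h, w ∈ (p u v h).support) ∧
    (∀ u v h u' v' h', ∀ w : W,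
      w ∈ (p u v h).support → w ∈ (p u' v' h').support →
      w ∈ Set.range f ∨ (u = u' ∧ v = v') ∨ (u = v' ∧ v = u'))

/-- Each component of `F` is an even circuit or a 2-connected cubic graph. -/
def GoodFrameComponents {U : Type*} (F : SimpleGraph U) : Prop :=
  ∀ c : F.ConnectedComponent,
    ((F.induce c.supp).Connected ∧ (∀ v, hdeg (F.induce c.supp) v = 2) ∧ Even c.supp.ncard) ∨
    (TwoConnected (F.induce c.supp) ∧ IsCubic (F.induce c.supp))

/-- `F` is a frame of `G`. -/
def IsFrame {U V : Type*} (F : SimpleGraph U) (G : SimpleGraph V) : Prop :=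
  GoodFrameComponents F ∧
    ∃ H : SimpleGraph V, H ≤ G ∧ IsSubdivisionOf H F ∧ EvenComponents H

/-- A proper 3-edge-coloring of `G`. -/
def ProperEdgeColoring {V : Type*} (G : SimpleGraph V) (f : Sym2 V → Fin 3) : Prop :=
  ∀ u v w : V, G.Adj u v → G.Adj u w → v ≠ w → f s(u, v) ≠ f s(u, w)

/-- The spanning subgraph of edges whose color is different from `c`
(i.e. the union of the other two color classes). -/
def twoClassSub {V : Type*} (G : SimpleGraph V) (f : Sym2 V → Fin 3) (c : Fin 3) :
    SimpleGraph V where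
  Adj u v := G.Adj u v ∧ f s(u, v) ≠ c
  symm := by
    constructor
    rintro u v ⟨h1, h2⟩
    exact ⟨h1.symm, by rwa [Sym2.eq_swap]⟩
  loopless := ⟨fun v h => G.loopless.irrefl v h.1⟩

/-- A Kotzig graph: a cubic graph with a proper 3-edge-coloring in which any two
color classes form a hamiltonian circuit. -/
def IsKotzig {V : Type*} (G : SimpleGraph V) : Prop :=
  IsCubic G ∧ ∃ f : Sym2 V → Fin 3, ProperEdgeColoring G f ∧
    ∀ c : Fin 3, (twoClassSub G f c).Connected ∧ ∀ v, hdeg (twoClassSub G f c) v = 2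

/-- The family `Fam` is an even subdivision-factor of `G`. -/
def IsEvenSubdivFactor {ι : Type*} (Fam : ι → Σ n : ℕ, SimpleGraph (Fin n))
    {V : Type*} (G : SimpleGraph V) : Prop :=
  ∃ H : SimpleGraph V, H ≤ G ∧ ∀ c : H.ConnectedComponent,
    Even c.supp.ncard ∧ ∃ i, IsSubdivisionOf (H.induce c.supp) (Fam i).2

/-! If an `f`-matching `M` covered all nine vertices of the copy of `P`, parity would leave
either all three cut edges in `M`, making `V(P)` a union of components of `G - M` of odd total
size, or exactly one, in which case `M` induces a perfect matching of `P₁₀` whose complement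
consists of two 5-cycles, one of them avoiding `z` and hence a union of components of `G - M`.
In both cases an odd set of vertices is closed in `G - M`, although every component of
`G - M` is even. -/

namespace SimpleGraph

variable {V W : Type*}

theorem Reachable.mem_of_forall_adj_mem {H : SimpleGraph V} {T : Set V}
    (hT : ∀ v ∈ T, ∀ w, H.Adj v w → w ∈ T) {u v : V} (huv : H.Reachable u v)
    (hu : u ∈ T) : v ∈ T := by
  obtain ⟨p⟩ := huv
  induction p with
  | nil => exact hu
  | cons h _ ih => exact ih (hT _ hu _ h)

theorem even_ncard_of_forall_adj_mem [Finite V] {H : SimpleGraph V}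
    (heven : ∀ c : H.ConnectedComponent, Even c.supp.ncard) {T : Set V}
    (hT : ∀ v ∈ T, ∀ w, H.Adj v w → w ∈ T) : Even T.ncard := by
  classical
  cases nonempty_fintype V
  rw [Set.ncard_eq_toFinset_card', Finset.card_eq_sum_card_image H.connectedComponentMk]
  refine Finset.even_sum _ fun c hc => ?_
  obtain ⟨v, hv, rfl⟩ := Finset.mem_image.1 hc
  rw [Set.mem_toFinset] at hv
  have hfilter : {u ∈ T.toFinset | H.connectedComponentMk u = H.connectedComponentMk v} =
      (H.connectedComponentMk v).supp.toFinset := by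
    ext u
    simp only [Finset.mem_filter, Set.mem_toFinset, ConnectedComponent.mem_supp_iff,
      and_iff_right_iff_imp]
    exact fun huv => (ConnectedComponent.exact huv).symm.mem_of_forall_adj_mem hT hv
  rw [hfilter, ← Set.ncard_eq_toFinset_card']
  exact heven _

theorem hdeg_eq_hdeg_deleteEdges_add [Finite V] (G : SimpleGraph V) (E : Set (Sym2 V)) (v : V) :
    hdeg G v = hdeg (G.deleteEdges E) v + {w | G.Adj v w ∧ s(v, w) ∈ E}.ncard := by
  rw [hdeg, hdeg, ← Set.ncard_union_eq]
  · congr 1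
    ext w
    simp only [Set.mem_ofPred_eq, Set.mem_union, deleteEdges_adj]
    tauto
  · exact Set.disjoint_left.2 fun w hw hw' => (deleteEdges_adj.1 hw).2 hw'.2

theorem hdeg_induce_supp (H : SimpleGraph V) (c : H.ConnectedComponent) (v : c.supp) :
    hdeg (H.induce c.supp) v = hdeg H v := by
  rw [hdeg, hdeg, ← Set.ncard_image_of_injective _ Subtype.val_injective]
  congr 1
  ext w
  simp only [Set.mem_image, Set.mem_ofPred_eq, comap_adj, Function.Embedding.subtype_apply]
  exact ⟨fun ⟨w', hw', h⟩ => h ▸ hw',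
    fun hw => ⟨⟨w, (c.mem_supp_congr_adj hw).1 v.2⟩, hw, rfl⟩⟩

theorem Iso.hdeg_eq {G : SimpleGraph V} {G' : SimpleGraph W} (φ : G ≃g G') (v : V) :
    hdeg G' (φ v) = hdeg G v := by
  rw [hdeg, hdeg, ← Set.ncard_image_of_injective _ φ.injective]
  congr 1
  ext w
  simp only [Set.mem_image, Set.mem_ofPred_eq]
  exact ⟨fun hw => ⟨φ.symm w, φ.map_adj_iff.1 (by rwa [φ.apply_symm_apply]), by simp⟩,
    fun ⟨w', hw', h⟩ => h ▸ φ.map_adj_iff.2 hw'⟩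

theorem hdeg_eq_degree (G : SimpleGraph V) (v : V) [Fintype (G.neighborSet v)] :
    hdeg G v = G.degree v := by
  rw [hdeg, ← card_neighborSet_eq_degree, ← Nat.card_eq_fintype_card]
  rfl

section ComponentCopy

variable {G : SimpleGraph V} {E : Set (Sym2 V)} {c : (G.deleteEdges E).ConnectedComponent}
  {F : SimpleGraph W} (φ : (G.deleteEdges E).induce c.supp ≃g F)

theorem Iso.adj_symm_coe_cases {y : W} {w : V} (h : G.Adj (φ.symm y) w) :
    (∃ y', F.Adj y y' ∧ (φ.symm y' : V) = w) ∨ s((φ.symm y : V), w) ∈ E := by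
  by_cases hE : s((φ.symm y : V), w) ∈ E
  · exact Or.inr hE
  · have hadj : (G.deleteEdges E).Adj (φ.symm y) w := deleteEdges_adj.2 ⟨h, hE⟩
    have hw : w ∈ c.supp := (c.mem_supp_congr_adj hadj).1 (φ.symm y).2
    refine Or.inl ⟨φ ⟨w, hw⟩, ?_, by simp⟩
    have hadj' : ((G.deleteEdges E).induce c.supp).Adj (φ.symm y) ⟨w, hw⟩ := hadj
    simpa using φ.map_adj_iff.2 hadj'

theorem Iso.hdeg_symm_coe [Finite V] (y : W) :
    hdeg G (φ.symm y) =
      hdeg F y + {w | G.Adj (φ.symm y) w ∧ s((φ.symm y : V), w) ∈ E}.ncard := by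
  rw [hdeg_eq_hdeg_deleteEdges_add G E, ← hdeg_induce_supp, ← φ.hdeg_eq, φ.apply_symm_apply]

end ComponentCopy

end SimpleGraph

instance : DecidableRel Pgr.Adj := fun a b =>
  decidable_of_iff' _ (fromRel_adj _ a b)

def pSymEdges : List (Sym2 (Fin 9)) := pEdges.map Sym2.mk.uncurry

theorem Pgr.two_le_degree : ∀ y, 2 ≤ Pgr.degree y := by decide

theorem mk_mem_pSymEdges_iff : ∀ a b, s(a, b) ∈ pSymEdges ↔ Pgr.Adj a b := by decide

theorem nodup_pSymEdges : pSymEdges.Nodup := by decide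

set_option synthInstance.maxSize 1000 in
set_option synthInstance.maxHeartbeats 1000000 in
set_option maxRecDepth 100000 in
/- The odd set is `V(P)` when no 2-valent vertex is matched inside `P`; otherwise `m` extends to
a perfect matching of `P₁₀`, and the odd set is the 5-cycle of the complementary 2-factor
avoiding `z`. -/
theorem Pgr.exists_odd_closed : ∀ m ∈ pSymEdges.sublists,
    m.Pairwise (fun e e' => ∀ y ∈ e, y ∉ e') →
    (∀ y, Pgr.degree y = 3 → ∃ e ∈ m, y ∈ e) →
    ∃ S : Finset (Fin 9), Odd S.card ∧ (∀ y ∈ S, Pgr.degree y < 3 → ∀ e ∈ m, y ∉ e) ∧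
      ∀ y ∈ S, ∀ y', Pgr.Adj y y' → s(y, y') ∉ m → y' ∈ S := by
  decide +kernel

section PetersenCopy

variable {V : Type*} {G : SimpleGraph V} {E : Set (Sym2 V)}
  {c : (G.deleteEdges E).ConnectedComponent} (φ : (G.deleteEdges E).induce c.supp ≃g Pgr)
  {M : Set (Sym2 V)}

open Classical in
noncomputable def pullMatching (M : Set (Sym2 V)) : List (Sym2 (Fin 9)) :=
  pSymEdges.filter fun e => e.map (fun y => (φ.symm y : V)) ∈ M

theorem injective_coe_symm : Function.Injective fun y => (φ.symm y : V) :=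
  Subtype.val_injective.comp φ.symm.injective

theorem mem_pullMatching {e : Sym2 (Fin 9)} :
    e ∈ pullMatching φ M ↔ e ∈ pSymEdges ∧ e.map (fun y => (φ.symm y : V)) ∈ M := by
  simp [pullMatching]

theorem mk_mem_pullMatching {a b : Fin 9} (h : Pgr.Adj a b) :
    s(a, b) ∈ pullMatching φ M ↔ s((φ.symm a : V), φ.symm b) ∈ M := by
  simp [mem_pullMatching, mk_mem_pSymEdges_iff, h]

theorem pairwise_pullMatching (hM : IsMatchingSet G M) :
    (pullMatching φ M).Pairwise fun e e' => ∀ y ∈ e, y ∉ e' := by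
  refine (nodup_pSymEdges.filter _).pairwise_of_forall_ne fun e he e' he' hne y hy hy' => ?_
  rw [← pullMatching, mem_pullMatching] at he he'
  exact hM.2 _ he.2 _ he'.2 (fun h => hne (Sym2.map.injective (injective_coe_symm φ) h)) _
    ⟨Sym2.mem_map.2 ⟨y, hy, rfl⟩, Sym2.mem_map.2 ⟨y, hy', rfl⟩⟩

theorem mem_pullMatching_or_cut (hM : M ⊆ G.edgeSet) {y : Fin 9}
    (hy : ∃ e ∈ M, (φ.symm y : V) ∈ e) :
    (∃ e ∈ pullMatching φ M, y ∈ e) ∨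
      ∃ w, G.Adj (φ.symm y) w ∧ s((φ.symm y : V), w) ∈ E ∧ s((φ.symm y : V), w) ∈ M := by
  obtain ⟨e, he, hye⟩ := hy
  obtain ⟨w, rfl⟩ := Sym2.mem_iff_exists.1 hye
  have hadj : G.Adj (φ.symm y) w := hM he
  rcases φ.adj_symm_coe_cases hadj with ⟨y', hyy', rfl⟩ | hE
  · exact Or.inl ⟨s(y, y'), (mk_mem_pullMatching φ hyy').2 he, Sym2.mem_mk_left _ _⟩
  · exact Or.inr ⟨w, hadj, hE, he⟩

variable [Finite V]

theorem degree_lt_three_of_cut (hG : IsCubic G) {y : Fin 9} {w : V}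
    (hw : G.Adj (φ.symm y) w) (hE : s((φ.symm y : V), w) ∈ E) : Pgr.degree y < 3 := by
  have h := φ.hdeg_symm_coe y
  rw [hG, hdeg_eq_degree] at h
  have : 0 < {w | G.Adj (φ.symm y) w ∧ s((φ.symm y : V), w) ∈ E}.ncard :=
    (Set.ncard_pos (Set.toFinite _)).2 ⟨w, hw, hE⟩
  omega

theorem eq_of_cut_of_cut (hG : IsCubic G) {y : Fin 9} {w w' : V}
    (hw : G.Adj (φ.symm y) w) (hE : s((φ.symm y : V), w) ∈ E)
    (hw' : G.Adj (φ.symm y) w') (hE' : s((φ.symm y : V), w') ∈ E) : w = w' := by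
  have h := φ.hdeg_symm_coe y
  rw [hG, hdeg_eq_degree] at h
  have := Pgr.two_le_degree y
  have hle : {w | G.Adj (φ.symm y) w ∧ s((φ.symm y : V), w) ∈ E}.ncard ≤ 1 := by omega
  exact (Set.ncard_le_one (Set.toFinite _)).1 hle w ⟨hw, hE⟩ w' ⟨hw', hE'⟩

theorem forall_adj_mem_image (hG : IsCubic G) (hM : M ⊆ G.edgeSet)
    (hcov : ∀ v ∈ c.supp, ∃ e ∈ M, v ∈ e) {S : Finset (Fin 9)}
    (hport : ∀ y ∈ S, Pgr.degree y < 3 → ∀ e ∈ pullMatching φ M, y ∉ e)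
    (hclosed : ∀ y ∈ S, ∀ y', Pgr.Adj y y' → s(y, y') ∉ pullMatching φ M → y' ∈ S) :
    ∀ v ∈ (fun y => (φ.symm y : V)) '' S, ∀ w, (G.deleteEdges M).Adj v w →
      w ∈ (fun y => (φ.symm y : V)) '' S := by
  rintro _ ⟨y, hy, rfl⟩ w hw
  obtain ⟨hadj, hwM⟩ := deleteEdges_adj.1 hw
  rcases φ.adj_symm_coe_cases hadj with ⟨y', hyy', rfl⟩ | hE
  · exact ⟨y', hclosed y hy y' hyy' (mt (mk_mem_pullMatching φ hyy').1 hwM), rfl⟩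
  · rcases mem_pullMatching_or_cut φ hM (hcov _ (φ.symm y).2) with
      ⟨e, he, hye⟩ | ⟨u, hu, huE, huM⟩
    · exact absurd hye (hport y hy (degree_lt_three_of_cut φ hG hadj hE) e he)
    · exact absurd (eq_of_cut_of_cut φ hG hu huE hadj hE ▸ huM) hwM

include φ in
theorem exists_odd_forall_adj_mem_of_covers (hG : IsCubic G) (hM : IsMatchingSet G M)
    (hcov : ∀ v ∈ c.supp, ∃ e ∈ M, v ∈ e) :
    ∃ T : Set V, Odd T.ncard ∧ ∀ v ∈ T, ∀ w, (G.deleteEdges M).Adj v w → w ∈ T := by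
  have hcover (y : Fin 9) (hy : Pgr.degree y = 3) : ∃ e ∈ pullMatching φ M, y ∈ e :=
    (mem_pullMatching_or_cut φ hM.1 (hcov _ (φ.symm y).2)).resolve_right
      fun ⟨_, hw, hE, _⟩ => (degree_lt_three_of_cut φ hG hw hE).ne hy
  obtain ⟨S, hodd, hport, hclosed⟩ := Pgr.exists_odd_closed _
    (List.mem_sublists.2 List.filter_sublist) (pairwise_pullMatching φ hM) hcover
  refine ⟨_, ?_, forall_adj_mem_image φ hG hM.1 hcov hport hclosed⟩
  rwa [Set.ncard_image_of_injective _ (injective_coe_symm φ), Set.ncard_coe_finset]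

end PetersenCopy

theorem stmt_11_general {V : Type} [Fintype V] (G : SimpleGraph V) (hG : IsCubic G)
    (E0 : Set (Sym2 V))
    (c : (G.deleteEdges E0).ConnectedComponent)
    (hiso : Nonempty (((G.deleteEdges E0).induce c.supp) ≃g Pgr))
    (M : Set (Sym2 V)) (hM : IsFMatching G M) :
    ∃ v ∈ c.supp, ∀ e ∈ M, v ∉ e := by
  by_contra! hcov
  obtain ⟨φ⟩ := hiso
  obtain ⟨T, hodd, hT⟩ := exists_odd_forall_adj_mem_of_covers φ hG hM.1 hcov
  exact Nat.not_even_iff_odd.2 hodd (even_ncard_of_forall_adj_mem (fun c => (hM.2 c).2) hT)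

/-- if one side of a minimal 3-edge cut `E₀` of a 2-connected cubic
graph `G` is a copy of `P = P₁₀ - z`, then for every `f`-matching `M` of `G` at
least one vertex of `V(P)` is not covered by `M`. -/
theorem stmt_11 {V : Type} [Fintype V] (G : SimpleGraph V) (hG : IsCubic G)
    (h2 : TwoConnected G) (E0 : Set (Sym2 V)) (hE : IsMinEdgeCut G E0)
    (hcard : E0.ncard = 3) (c : (G.deleteEdges E0).ConnectedComponent)
    (hiso : Nonempty (((G.deleteEdges E0).induce c.supp) ≃g Pgr))
    (M : Set (Sym2 V)) (hM : IsFMatching G M) :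
    ∃ v ∈ c.supp, ∀ e ∈ M, v ∉ e :=
  stmt_11_general G hG E0 c hiso M hM
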